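/- arXiv:1604.03224 — 3 statements merged into one kernel-verified Lean document; each statement's English description precedes it below -/
import Mathlib

section
/- Let L, M be positive integers and N = L·M. Assume λ is multiplicative, that λ(p)² = 1/p for every prime p with p | M and p² ∤ M, that λ(p) = 0 for every prime p with p² | M, and that ρ(p) > 0 for every prime p with p | L and p ∤ M. Then Σ_{d | L} ξ_d(1)² = ∏_{p prime, p | L, p ∤ M} ρ(p)^{-1} · ∏_{p prime, p² | N, p² ∤ M} p²/(p² − 1). -/
open scoped BigOperators
open Finset

noncomputable section

/-- A multiplicative arithmetic function: `λ(1) = 1` and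
`λ(ab) = λ(a)λ(b)` whenever `gcd(a,b) = 1`. -/
def IsMult (lam : ℕ → ℝ) : Prop :=
  lam 1 = 1 ∧ ∀ a b : ℕ, Nat.Coprime a b → lam (a * b) = lam a * lam b

/-- The trivial character mod `M`: `χ(n) = 1` if `gcd(n,M) = 1`, else `0`. -/
def chi (M n : ℕ) : ℝ := if Nat.gcd n M = 1 then 1 else 0

/-- `σ(b) = Σ_{r | b} χ(r)/r` (twisted divisor sum). -/
def sigTw (M b : ℕ) : ℝ := ∑ r ∈ b.divisors, chi M r / r

/-- `r(c) = Σ_{b | c} μ(b)λ(b)² / (b σ(b)²)`. -/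
def rF (M : ℕ) (lam : ℕ → ℝ) (c : ℕ) : ℝ :=
  ∑ b ∈ c.divisors,
    (ArithmeticFunction.moebius b : ℝ) * (lam b) ^ 2 / (b * (sigTw M b) ^ 2)

/-- `α(c) = Σ_{b | c} χ(b)μ(b)/b²`. -/
def alphaF (M c : ℕ) : ℝ :=
  ∑ b ∈ c.divisors, chi M b * (ArithmeticFunction.moebius b : ℝ) / (b : ℝ) ^ 2

/-- `β(c) = Σ_{b | c} χ(b)μ(b)²/b`. -/
def betaF (M c : ℕ) : ℝ :=
  ∑ b ∈ c.divisors, chi M b * (ArithmeticFunction.moebius b : ℝ) ^ 2 / b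

/-- The multiplicative function `μ_λ` determined by `μ_λ(p) = -λ(p)`,
`μ_λ(p²) = χ(p)`, `μ_λ(p^j) = 0` for `j ≥ 3`. -/
def muLam (M : ℕ) (lam : ℕ → ℝ) (d : ℕ) : ℝ :=
  ∏ p ∈ d.primeFactors,
    (if d.factorization p = 1 then -lam p
     else if d.factorization p = 2 then chi M p else 0)

/-- The squarefree part `d₁` of `d`. -/
def sfPart (d : ℕ) : ℕ :=
  ∏ p ∈ d.primeFactors, if d.factorization p = 1 then p else 1

/-- The squarefull part `d₂` of `d`. -/
def ffPart (d : ℕ) : ℕ :=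
  ∏ p ∈ d.primeFactors, if d.factorization p = 1 then 1 else p ^ d.factorization p

/-- `ξ'_{d₁}(g) = μ(d₁/g)λ(d₁/g) / (r(d₁)^{1/2} (d₁/g)^{1/2} β(d₁/g))` for `g ∣ d₁`. -/
def xi' (M : ℕ) (lam : ℕ → ℝ) (d₁ g : ℕ) : ℝ :=
  (ArithmeticFunction.moebius (d₁ / g) : ℝ) * lam (d₁ / g) /
    (Real.sqrt (rF M lam d₁) * Real.sqrt ((d₁ / g : ℕ) : ℝ) * betaF M (d₁ / g))

/-- `ξ''_{d₂}(g) = μ_λ(d₂/g) / ((d₂/g)^{1/2} (r(d₂)α(d₂))^{1/2})` for `g ∣ d₂`. -/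
def xi'' (M : ℕ) (lam : ℕ → ℝ) (d₂ g : ℕ) : ℝ :=
  muLam M lam (d₂ / g) /
    (Real.sqrt ((d₂ / g : ℕ) : ℝ) * Real.sqrt (rF M lam d₂ * alphaF M d₂))

/-- `ξ_d(ℓ) = ξ'_{d₁}(gcd(d₁,ℓ)) ξ''_{d₂}(gcd(d₂,ℓ))`. -/
def xi (M : ℕ) (lam : ℕ → ℝ) (d ℓ : ℕ) : ℝ :=
  xi' M lam (sfPart d) (Nat.gcd (sfPart d) ℓ) *
    xi'' M lam (ffPart d) (Nat.gcd (ffPart d) ℓ)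

/-- `ρ(p) = 1 - p (λ(p)/(p+1))²`. -/
def rho (lam : ℕ → ℝ) (p : ℕ) : ℝ := 1 - p * (lam p / (p + 1)) ^ 2

/-!
Write `W(d) = A(d₁) B(d₂)` (`xiSqWeight`, `sfWeight`, `ffWeight`) for `ξ_d(1)²` with the square
roots of `r(d₁)` and `r(d₂)α(d₂)` squared away. For `d ∣ L` these quantities are positive (this is
what `ρ(p) > 0` and the conditions on `λ` at primes dividing `M` give), so `ξ_d(1)² = W(d)`.
Every ingredient of `W` (`μ`, `λ`, `χ`, `σ`, `r`, `α`, `β`, `μ_λ`, `d ↦ d₁`, `d ↦ d₂`) is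
multiplicative, hence so is `W`, and `Σ_{d ∣ L} W(d) = ∏_{p^k ∥ L} (1 + A(p) + [k ≥ 2] B(p²))`
because `μ_λ(p^j) = 0` for `j ≥ 3`. For `p ∤ M` one has `r(p^k) = ρ(p)`, `1 + A(p) = ρ(p)⁻¹` and
`B(p²) = ρ(p)⁻¹/(p² - 1)`. For `p ∣ M` one has `χ(p) = 0`, so `B(p²) = 0` and
`1 + A(p) = 1/(1 - λ(p)²/p)`, which is `1` if `p² ∣ M` and `p²/(p² - 1)` if `p ∥ M`.
-/

namespace IsMult

variable {f g : ℕ → ℝ}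

lemma mul (hf : IsMult f) (hg : IsMult g) : IsMult fun n => f n * g n :=
  ⟨by simp [hf.1, hg.1], fun a b hab => by beta_reduce; rw [hf.2 a b hab, hg.2 a b hab]; ring⟩

lemma div (hf : IsMult f) (hg : IsMult g) : IsMult fun n => f n / g n :=
  ⟨by simp [hf.1, hg.1], fun a b hab => by
    beta_reduce; rw [hf.2 a b hab, hg.2 a b hab, mul_div_mul_comm]⟩

lemma pow (hf : IsMult f) (k : ℕ) : IsMult fun n => f n ^ k :=
  ⟨by simp [hf.1], fun a b hab => by beta_reduce; rw [hf.2 a b hab, mul_pow]⟩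

lemma sum_divisors (hf : IsMult f) : IsMult fun n => ∑ d ∈ n.divisors, f d := by
  refine ⟨by simp [hf.1], fun m n hmn => ?_⟩
  beta_reduce
  rw [Nat.divisors_mul, Finset.mul_def, sum_image hmn.mul_injOn_divisors, sum_mul_sum,
    sum_product]
  refine sum_congr rfl fun a ha => sum_congr rfl fun b hb => hf.2 a b ?_
  exact (hmn.coprime_dvd_left (Nat.dvd_of_mem_divisors ha)).coprime_dvd_right
    (Nat.dvd_of_mem_divisors hb)

lemma comp_of_dvd (hf : IsMult f) {s : ℕ → ℕ} (hs1 : s 1 = 1)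
    (hs : ∀ m n, Nat.Coprime m n → s (m * n) = s m * s n) (hdvd : ∀ n, s n ∣ n) :
    IsMult fun n => f (s n) := by
  refine ⟨by beta_reduce; rw [hs1, hf.1], fun m n hmn => ?_⟩
  beta_reduce
  rw [hs m n hmn, hf.2 _ _ ((hmn.coprime_dvd_left (hdvd m)).coprime_dvd_right (hdvd n))]

lemma eq_prod_primeFactors (hf : IsMult f) {n : ℕ} (hn : n ≠ 0) :
    f n = ∏ p ∈ n.primeFactors, f (p ^ n.factorization p) := by
  rw [Nat.multiplicative_factorization f hf.2 hf.1 hn, Finsupp.prod, Nat.support_factorization]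

lemma pos (hf : IsMult f) {n : ℕ} (hn : n ≠ 0)
    (h : ∀ p ∈ n.primeFactors, 0 < f (p ^ n.factorization p)) : 0 < f n := by
  rw [hf.eq_prod_primeFactors hn]
  exact prod_pos h

end IsMult

lemma isMult_natCast : IsMult fun n => (n : ℝ) :=
  ⟨Nat.cast_one, fun a b _ => Nat.cast_mul a b⟩

lemma isMult_moebius : IsMult fun n => (ArithmeticFunction.moebius n : ℝ) :=
  ⟨by simp, fun a b hab => by
    beta_reduce
    rw [ArithmeticFunction.isMultiplicative_moebius.map_mul_of_coprime hab, Int.cast_mul]⟩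

lemma isMult_chi (M : ℕ) : IsMult (chi M) := by
  refine ⟨by simp [chi], fun m n _ => ?_⟩
  by_cases hm : Nat.Coprime m M <;> by_cases hn : Nat.Coprime n M <;>
    simp [chi, Nat.coprime_mul_iff_left, hm, hn]

section FactorizationProd

variable {G : Type*} [CommMonoid G] (g : ℕ → ℕ → G)

lemma prod_primeFactors_factorization_mul {m n : ℕ} (hmn : m.Coprime n) :
    ∏ p ∈ (m * n).primeFactors, g p ((m * n).factorization p) =
      (∏ p ∈ m.primeFactors, g p (m.factorization p)) *
        ∏ p ∈ n.primeFactors, g p (n.factorization p) := by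
  simp only [← Nat.support_factorization]
  change (m * n).factorization.prod g = m.factorization.prod g * n.factorization.prod g
  rw [Nat.factorization_mul_of_coprime hmn]
  exact Finsupp.prod_add_index_of_disjoint hmn.disjoint_primeFactors g

lemma prod_primeFactors_factorization_prime_pow {p k : ℕ} (hp : p.Prime) (hk : k ≠ 0) :
    ∏ q ∈ (p ^ k).primeFactors, g q ((p ^ k).factorization q) = g p k := by
  rw [Nat.primeFactors_prime_pow hk hp, prod_singleton, hp.factorization_pow,
    Finsupp.single_eq_same]

end FactorizationProd

section PrimeFactorsDefs

variable (M : ℕ) (lam : ℕ → ℝ)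

lemma isMult_muLam : IsMult (muLam M lam) :=
  ⟨by simp [muLam], fun _ _ => prod_primeFactors_factorization_mul
    (fun p k => if k = 1 then -lam p else if k = 2 then chi M p else 0)⟩

lemma muLam_prime_pow {p k : ℕ} (hp : p.Prime) (hk : k ≠ 0) :
    muLam M lam (p ^ k) = if k = 1 then -lam p else if k = 2 then chi M p else 0 :=
  prod_primeFactors_factorization_prime_pow
    (fun p k => if k = 1 then -lam p else if k = 2 then chi M p else 0) hp hk

lemma sfPart_one : sfPart 1 = 1 := by simp [sfPart]

lemma ffPart_one : ffPart 1 = 1 := by simp [ffPart]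

lemma sfPart_mul {m n : ℕ} (hmn : m.Coprime n) : sfPart (m * n) = sfPart m * sfPart n :=
  prod_primeFactors_factorization_mul (fun p k => if k = 1 then p else 1) hmn

lemma ffPart_mul {m n : ℕ} (hmn : m.Coprime n) : ffPart (m * n) = ffPart m * ffPart n :=
  prod_primeFactors_factorization_mul (fun p k => if k = 1 then 1 else p ^ k) hmn

lemma sfPart_prime_pow {p k : ℕ} (hp : p.Prime) (hk : k ≠ 0) :
    sfPart (p ^ k) = if k = 1 then p else 1 :=
  prod_primeFactors_factorization_prime_pow (fun p k => if k = 1 then p else 1) hp hk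

lemma ffPart_prime_pow {p k : ℕ} (hp : p.Prime) (hk : k ≠ 0) :
    ffPart (p ^ k) = if k = 1 then 1 else p ^ k :=
  prod_primeFactors_factorization_prime_pow (fun p k => if k = 1 then 1 else p ^ k) hp hk

lemma sfPart_mul_ffPart {d : ℕ} (hd : d ≠ 0) : sfPart d * ffPart d = d := by
  conv_rhs => rw [← Nat.prod_factorization_pow_eq_self hd]
  rw [sfPart, ffPart, ← prod_mul_distrib, Finsupp.prod, Nat.support_factorization]
  refine prod_congr rfl fun p _ => ?_
  split_ifs with h <;> simp [h]

lemma sfPart_dvd (d : ℕ) : sfPart d ∣ d := by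
  rcases eq_or_ne d 0 with rfl | hd
  · exact dvd_zero _
  · exact Dvd.intro _ (sfPart_mul_ffPart hd)

lemma ffPart_dvd (d : ℕ) : ffPart d ∣ d := by
  rcases eq_or_ne d 0 with rfl | hd
  · exact dvd_zero _
  · exact Dvd.intro_left _ (sfPart_mul_ffPart hd)

end PrimeFactorsDefs

section DivisorSums

variable (M : ℕ) (lam : ℕ → ℝ)

lemma chi_prime_of_dvd {p : ℕ} (hp : p.Prime) (hpM : p ∣ M) : chi M p = 0 :=
  if_neg fun h : Nat.gcd p M = 1 => hp.ne_one (Nat.dvd_one.mp (h ▸ Nat.dvd_gcd dvd_rfl hpM))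

lemma chi_prime_of_not_dvd {p : ℕ} (hp : p.Prime) (hpM : ¬ p ∣ M) : chi M p = 1 :=
  if_pos ((Nat.Prime.coprime_iff_not_dvd hp).mpr hpM)

lemma isMult_sigTw : IsMult (sigTw M) :=
  ((isMult_chi M).div isMult_natCast).sum_divisors

lemma isMult_rF (hl : IsMult lam) : IsMult (rF M lam) :=
  ((isMult_moebius.mul (hl.pow 2)).div (isMult_natCast.mul ((isMult_sigTw M).pow 2))).sum_divisors

lemma isMult_alphaF : IsMult (alphaF M) :=
  (((isMult_chi M).mul isMult_moebius).div (isMult_natCast.pow 2)).sum_divisors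

lemma isMult_betaF : IsMult (betaF M) :=
  (((isMult_chi M).mul (isMult_moebius.pow 2)).div isMult_natCast).sum_divisors

lemma sum_divisors_prime_pow_of_vanish {f : ℕ → ℝ} {p k : ℕ} (hp : p.Prime) (hk : k ≠ 0)
    (hf : ∀ j ≥ 2, f (p ^ j) = 0) : ∑ d ∈ (p ^ k).divisors, f d = f 1 + f p := by
  rw [Nat.sum_divisors_prime_pow hp, eventually_constant_sum hf (by omega)]
  simp [sum_range_succ]

lemma moebius_prime_pow_eq_zero {p j : ℕ} (hp : p.Prime) (hj : 2 ≤ j) :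
    ArithmeticFunction.moebius (p ^ j) = 0 := by
  rw [ArithmeticFunction.moebius_apply_prime_pow hp (by omega), if_neg (by omega)]

lemma sigTw_prime {p : ℕ} (hp : p.Prime) : sigTw M p = 1 + chi M p / p := by
  simp [sigTw, hp.sum_divisors, (isMult_chi M).1, add_comm]

lemma betaF_prime {p : ℕ} (hp : p.Prime) : betaF M p = 1 + chi M p / p := by
  simp [betaF, hp.sum_divisors, (isMult_chi M).1, ArithmeticFunction.moebius_apply_prime hp,
    add_comm]

lemma rF_prime_pow (hl1 : lam 1 = 1) {p k : ℕ} (hp : p.Prime) (hk : k ≠ 0) :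
    rF M lam (p ^ k) = 1 - lam p ^ 2 / (p * sigTw M p ^ 2) := by
  rw [rF, sum_divisors_prime_pow_of_vanish hp hk fun j hj => by
    simp [moebius_prime_pow_eq_zero hp hj]]
  simp [ArithmeticFunction.moebius_apply_prime hp, hl1, sigTw, (isMult_chi M).1, neg_div,
    sub_eq_add_neg]

lemma alphaF_prime_pow {p k : ℕ} (hp : p.Prime) (hk : k ≠ 0) :
    alphaF M (p ^ k) = 1 - chi M p / (p : ℝ) ^ 2 := by
  rw [alphaF, sum_divisors_prime_pow_of_vanish hp hk fun j hj => by
    simp [moebius_prime_pow_eq_zero hp hj]]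
  simp [ArithmeticFunction.moebius_apply_prime hp, (isMult_chi M).1, neg_div, sub_eq_add_neg]

end DivisorSums

section Weights

variable (M : ℕ) (lam : ℕ → ℝ)

def sfWeight (d : ℕ) : ℝ :=
  ((ArithmeticFunction.moebius d : ℝ) * lam d) ^ 2 / (rF M lam d * d * betaF M d ^ 2)

def ffWeight (d : ℕ) : ℝ :=
  muLam M lam d ^ 2 / (d * (rF M lam d * alphaF M d))

def xiSqWeight (d : ℕ) : ℝ :=
  sfWeight M lam (sfPart d) * ffWeight M lam (ffPart d)

lemma xi_one_sq {d : ℕ} (hsf : 0 ≤ rF M lam (sfPart d))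
    (hff : 0 ≤ rF M lam (ffPart d) * alphaF M (ffPart d)) :
    xi M lam d 1 ^ 2 = xiSqWeight M lam d := by
  simp only [xi, xi', xi'', xiSqWeight, sfWeight, ffWeight, Nat.gcd_one_right, Nat.div_one,
    mul_pow, div_pow, Real.sq_sqrt hsf, Real.sq_sqrt hff, Real.sq_sqrt (Nat.cast_nonneg _)]

lemma isMult_xiSqWeight (hl : IsMult lam) : IsMult (xiSqWeight M lam) :=
  have hsf : IsMult (sfWeight M lam) :=
    ((isMult_moebius.mul hl).pow 2).div
      (((isMult_rF M lam hl).mul isMult_natCast).mul ((isMult_betaF M).pow 2))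
  have hff : IsMult (ffWeight M lam) :=
    ((isMult_muLam M lam).pow 2).div
      (isMult_natCast.mul ((isMult_rF M lam hl).mul (isMult_alphaF M)))
  (hsf.comp_of_dvd sfPart_one (fun _ _ => sfPart_mul) sfPart_dvd).mul
    (hff.comp_of_dvd ffPart_one (fun _ _ => ffPart_mul) ffPart_dvd)

lemma xiSqWeight_prime_pow (hl : IsMult lam) {p k : ℕ} (hp : p.Prime) (hk : k ≠ 0) :
    xiSqWeight M lam (p ^ k) = if k = 1 then sfWeight M lam p else ffWeight M lam (p ^ k) := by
  have hone : sfWeight M lam 1 = 1 ∧ ffWeight M lam 1 = 1 := by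
    simp [sfWeight, ffWeight, (isMult_rF M lam hl).1, (isMult_alphaF M).1, (isMult_betaF M).1,
      (isMult_muLam M lam).1, hl.1]
  rw [xiSqWeight, sfPart_prime_pow hp hk, ffPart_prime_pow hp hk]
  split_ifs <;> simp [hone]

lemma sum_divisors_xiSqWeight_prime_pow (hl : IsMult lam) {p k : ℕ} (hp : p.Prime)
    (hk : k ≠ 0) :
    ∑ d ∈ (p ^ k).divisors, xiSqWeight M lam d =
      1 + sfWeight M lam p + if 2 ≤ k then ffWeight M lam (p ^ 2) else 0 := by
  have hW {j : ℕ} (hj : j ≠ 0) := xiSqWeight_prime_pow M lam hl hp hj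
  have hW1 : xiSqWeight M lam p = sfWeight M lam p := by simpa using hW one_ne_zero
  have hW0 : xiSqWeight M lam 1 = 1 := (isMult_xiSqWeight M lam hl).1
  rw [Nat.sum_divisors_prime_pow hp]
  rcases Nat.lt_or_ge k 2 with hk2 | hk2
  · obtain rfl : k = 1 := by omega
    simp [sum_range_succ, hW0, hW1]
  · have hvanish : ∀ j ≥ 3, xiSqWeight M lam (p ^ j) = 0 := fun j hj => by
      simp [hW (show j ≠ 0 by omega), show j ≠ 1 by omega, ffWeight,
        muLam_prime_pow M lam hp (show j ≠ 0 by omega), show j ≠ 2 by omega]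
    rw [eventually_constant_sum hvanish (by omega)]
    simp [sum_range_succ, hW two_ne_zero, hW0, hW1, hk2]

end Weights

section LocalFactors

variable (M : ℕ) (lam : ℕ → ℝ)

lemma rF_prime_pow_of_not_dvd (hl1 : lam 1 = 1) {p k : ℕ} (hp : p.Prime) (hk : k ≠ 0)
    (hpM : ¬ p ∣ M) : rF M lam (p ^ k) = rho lam p := by
  have : (p : ℝ) ≠ 0 := by exact_mod_cast hp.ne_zero
  rw [rF_prime_pow M lam hl1 hp hk, sigTw_prime M hp, chi_prime_of_not_dvd M hp hpM, rho]
  field_simp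

lemma rF_prime_pow_of_dvd (hl1 : lam 1 = 1) {p k : ℕ} (hp : p.Prime) (hk : k ≠ 0)
    (hpM : p ∣ M) : rF M lam (p ^ k) = 1 - lam p ^ 2 / p := by
  rw [rF_prime_pow M lam hl1 hp hk, sigTw_prime M hp, chi_prime_of_dvd M hp hpM]
  simp

lemma sum_divisors_xiSqWeight_prime_pow_of_not_dvd (hl : IsMult lam) {p k : ℕ} (hp : p.Prime)
    (hk : k ≠ 0) (hpM : ¬ p ∣ M) (hρ : rho lam p ≠ 0) :
    ∑ d ∈ (p ^ k).divisors, xiSqWeight M lam d =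
      (rho lam p)⁻¹ * if 2 ≤ k then (p : ℝ) ^ 2 / ((p : ℝ) ^ 2 - 1) else 1 := by
  have hp1 : (1 : ℝ) < p := by exact_mod_cast hp.one_lt
  have hp2 : (p : ℝ) ^ 2 - 1 ≠ 0 := by nlinarith
  have hlam : lam p ^ 2 = (1 - rho lam p) * (p + 1) ^ 2 / p := by
    rw [rho]
    field_simp
    ring
  have hsf : sfWeight M lam p = (1 - rho lam p) / rho lam p := by
    rw [sfWeight, ← pow_one p, rF_prime_pow_of_not_dvd M lam hl.1 hp one_ne_zero hpM, pow_one,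
      betaF_prime M hp, chi_prime_of_not_dvd M hp hpM, ArithmeticFunction.moebius_apply_prime hp,
      mul_pow, hlam]
    field_simp
    ring
  have hff : ffWeight M lam (p ^ 2) = 1 / (rho lam p * ((p : ℝ) ^ 2 - 1)) := by
    rw [ffWeight, muLam_prime_pow M lam hp two_ne_zero,
      rF_prime_pow_of_not_dvd M lam hl.1 hp two_ne_zero hpM, alphaF_prime_pow M hp two_ne_zero,
      chi_prime_of_not_dvd M hp hpM]
    field_simp
    simp
  rw [sum_divisors_xiSqWeight_prime_pow M lam hl hp hk, hsf, hff]
  split_ifs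
  · field_simp
    ring
  · field_simp
    ring

lemma sum_divisors_xiSqWeight_prime_pow_of_dvd (hl : IsMult lam) {p k : ℕ} (hp : p.Prime)
    (hk : k ≠ 0) (hpM : p ∣ M) (h1 : ¬ p ^ 2 ∣ M → lam p ^ 2 = 1 / p)
    (h2 : p ^ 2 ∣ M → lam p = 0) :
    ∑ d ∈ (p ^ k).divisors, xiSqWeight M lam d =
      if p ^ 2 ∣ M then 1 else (p : ℝ) ^ 2 / ((p : ℝ) ^ 2 - 1) := by
  have hp1 : (1 : ℝ) < p := by exact_mod_cast hp.one_lt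
  have hp2 : (p : ℝ) ^ 2 - 1 ≠ 0 := by nlinarith
  have hff : ffWeight M lam (p ^ 2) = 0 := by
    simp [ffWeight, muLam_prime_pow M lam hp two_ne_zero, chi_prime_of_dvd M hp hpM]
  have hsf : sfWeight M lam p = lam p ^ 2 / ((1 - lam p ^ 2 / p) * p) := by
    rw [sfWeight, ← pow_one p, rF_prime_pow_of_dvd M lam hl.1 hp one_ne_zero hpM, pow_one,
      betaF_prime M hp, chi_prime_of_dvd M hp hpM, ArithmeticFunction.moebius_apply_prime hp]
    simp
  rw [sum_divisors_xiSqWeight_prime_pow M lam hl hp hk, hff, hsf, ite_self, add_zero]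
  by_cases hp2M : p ^ 2 ∣ M
  · simp [hp2M, h2 hp2M]
  · rw [if_neg hp2M, h1 hp2M]
    field_simp
    ring

lemma sum_divisors_xiSqWeight_factorization (hl : IsMult lam) {L p : ℕ} (hp : p ∈ L.primeFactors)
    (h1 : p ∣ M → ¬ p ^ 2 ∣ M → lam p ^ 2 = 1 / p)
    (h2 : p ^ 2 ∣ M → lam p = 0) (h3 : ¬ p ∣ M → 0 < rho lam p) :
    ∑ d ∈ (p ^ L.factorization p).divisors, xiSqWeight M lam d =
      (if ¬ p ∣ M then (rho lam p)⁻¹ else 1) *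
        if p ^ 2 ∣ L * M ∧ ¬ p ^ 2 ∣ M then (p : ℝ) ^ 2 / ((p : ℝ) ^ 2 - 1) else 1 := by
  obtain ⟨pp, hpL, hL⟩ := Nat.mem_primeFactors.mp hp
  have hk : L.factorization p ≠ 0 := Finsupp.mem_support_iff.mp hp
  by_cases hpM : p ∣ M
  · have hpLM : p ^ 2 ∣ L * M := pow_two p ▸ mul_dvd_mul hpL hpM
    rw [sum_divisors_xiSqWeight_prime_pow_of_dvd M lam hl pp hk hpM (h1 hpM) h2,
      if_neg (not_not.2 hpM),
      one_mul]
    by_cases hp2M : p ^ 2 ∣ M <;> simp [hp2M, hpLM]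
  · have hpLM : p ^ 2 ∣ L * M ↔ 2 ≤ L.factorization p := by
      rw [(Nat.Coprime.pow_left 2 (pp.coprime_iff_not_dvd.2 hpM)).dvd_mul_right,
        pp.pow_dvd_iff_le_factorization hL]
    have hp2M : ¬ p ^ 2 ∣ M := fun h => hpM ((dvd_pow_self p two_ne_zero).trans h)
    rw [sum_divisors_xiSqWeight_prime_pow_of_not_dvd M lam hl pp hk hpM (h3 hpM).ne', if_pos hpM]
    simp [hpLM, hp2M]

end LocalFactors

section Positivity

variable (M : ℕ) (lam : ℕ → ℝ)

lemma alphaF_pos {e : ℕ} (he : e ≠ 0) : 0 < alphaF M e := by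
  refine (isMult_alphaF M).pos he fun p hp => ?_
  have pp := Nat.prime_of_mem_primeFactors hp
  have hp1 : (1 : ℝ) < p := by exact_mod_cast pp.one_lt
  have hchi : chi M p ≤ 1 := by unfold chi; split_ifs <;> norm_num
  rw [alphaF_prime_pow M pp (Finsupp.mem_support_iff.mp hp), sub_pos,
    div_lt_one (by positivity)]
  nlinarith

lemma rF_prime_pow_pos (hl1 : lam 1 = 1) {p k : ℕ} (hp : p.Prime) (hk : k ≠ 0)
    (h1 : p ∣ M → ¬ p ^ 2 ∣ M → lam p ^ 2 = 1 / p) (h2 : p ^ 2 ∣ M → lam p = 0)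
    (h3 : ¬ p ∣ M → 0 < rho lam p) : 0 < rF M lam (p ^ k) := by
  by_cases hpM : p ∣ M
  · have hp1 : (1 : ℝ) < p := by exact_mod_cast hp.one_lt
    rw [rF_prime_pow_of_dvd M lam hl1 hp hk hpM]
    by_cases hp2M : p ^ 2 ∣ M
    · simp [h2 hp2M]
    · rw [h1 hpM hp2M, div_div, sub_pos, div_lt_one (by positivity)]
      nlinarith
  · rw [rF_prime_pow_of_not_dvd M lam hl1 hp hk hpM]
    exact h3 hpM

lemma rF_pos (hl : IsMult lam)
    (h1 : ∀ p : ℕ, p.Prime → p ∣ M → ¬ p ^ 2 ∣ M → lam p ^ 2 = 1 / p)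
    (h2 : ∀ p : ℕ, p.Prime → p ^ 2 ∣ M → lam p = 0) {e : ℕ} (he : e ≠ 0)
    (h3 : ∀ p ∈ e.primeFactors, ¬ p ∣ M → 0 < rho lam p) : 0 < rF M lam e := by
  refine (isMult_rF M lam hl).pos he fun p hp => ?_
  have pp := Nat.prime_of_mem_primeFactors hp
  exact rF_prime_pow_pos M lam hl.1 pp (Finsupp.mem_support_iff.mp hp) (h1 p pp) (h2 p pp)
    (h3 p hp)

lemma xi_one_sq_of_dvd (hl : IsMult lam)
    (h1 : ∀ p : ℕ, p.Prime → p ∣ M → ¬ p ^ 2 ∣ M → lam p ^ 2 = 1 / p)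
    (h2 : ∀ p : ℕ, p.Prime → p ^ 2 ∣ M → lam p = 0) {L d : ℕ} (hL : L ≠ 0)
    (h3 : ∀ p : ℕ, p.Prime → p ∣ L → ¬ p ∣ M → 0 < rho lam p) (hd : d ∣ L) :
    xi M lam d 1 ^ 2 = xiSqWeight M lam d := by
  have hne {e : ℕ} (he : e ∣ d) : e ≠ 0 :=
    ne_zero_of_dvd_ne_zero (ne_zero_of_dvd_ne_zero hL hd) he
  have hpos {e : ℕ} (he : e ∣ d) : 0 < rF M lam e :=
    rF_pos M lam hl h1 h2 (hne he) fun p hp =>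
      h3 p (Nat.prime_of_mem_primeFactors hp) ((Nat.dvd_of_mem_primeFactors hp).trans (he.trans hd))
  exact xi_one_sq M lam (hpos (sfPart_dvd d)).le
    (mul_pos (hpos (ffPart_dvd d)) (alphaF_pos M (hne (ffPart_dvd d)))).le

end Positivity

lemma primeFactors_mul_filter_sq_dvd {L : ℕ} (M : ℕ) (hL : L ≠ 0) :
    (L * M).primeFactors.filter (fun p => p ^ 2 ∣ L * M ∧ ¬ p ^ 2 ∣ M) =
      L.primeFactors.filter (fun p => p ^ 2 ∣ L * M ∧ ¬ p ^ 2 ∣ M) := by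
  ext p
  simp only [mem_filter, Nat.mem_primeFactors]
  constructor
  · rintro ⟨⟨pp, -, -⟩, hLM, hM⟩
    refine ⟨⟨pp, ?_, hL⟩, hLM, hM⟩
    by_contra hpL
    exact hM ((Nat.Coprime.pow_left 2 (pp.coprime_iff_not_dvd.2 hpL)).dvd_of_dvd_mul_left hLM)
  · rintro ⟨⟨pp, hpL, -⟩, hLM, hM⟩
    have hM0 : M ≠ 0 := by
      rintro rfl
      exact hM (dvd_zero _)
    exact ⟨⟨pp, hpL.mul_right M, mul_ne_zero hL hM0⟩, hLM, hM⟩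

theorem sum_xi_one_sq_general (L M N : ℕ) (hL : 0 < L) (hN : N = L * M)
    (lam : ℕ → ℝ) (hmult : IsMult lam)
    (h1 : ∀ p : ℕ, p.Prime → p ∣ M → ¬ p ^ 2 ∣ M → (lam p) ^ 2 = 1 / p)
    (h2 : ∀ p : ℕ, p.Prime → p ^ 2 ∣ M → lam p = 0)
    (h3 : ∀ p : ℕ, p.Prime → p ∣ L → ¬ p ∣ M → 0 < rho lam p) :
    ∑ d ∈ L.divisors, (xi M lam d 1) ^ 2 =
      (∏ p ∈ L.primeFactors.filter (fun p => ¬ p ∣ M), (rho lam p)⁻¹) *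
        ∏ p ∈ N.primeFactors.filter (fun p => p ^ 2 ∣ N ∧ ¬ p ^ 2 ∣ M),
          (p : ℝ) ^ 2 / ((p : ℝ) ^ 2 - 1) := by
  subst hN
  have hW : ∀ d ∈ L.divisors, xi M lam d 1 ^ 2 = xiSqWeight M lam d := fun d hd =>
    xi_one_sq_of_dvd M lam hmult h1 h2 hL.ne' h3 (Nat.dvd_of_mem_divisors hd)
  have hprod := (isMult_xiSqWeight M lam hmult).sum_divisors.eq_prod_primeFactors hL.ne'
  rw [sum_congr rfl hW, hprod, primeFactors_mul_filter_sq_dvd M hL.ne', prod_filter, prod_filter,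
    ← prod_mul_distrib]
  refine prod_congr rfl fun p hp => ?_
  have pp := Nat.prime_of_mem_primeFactors hp
  exact sum_divisors_xiSqWeight_factorization M lam hmult hp (h1 p pp) (h2 p pp)
    (h3 p pp (Nat.dvd_of_mem_primeFactors hp))

/-- If `N = L·M`, `λ` is multiplicative, `λ(p)² = 1/p` whenever
`p ∥ M`, `λ(p) = 0` whenever `p² ∣ M`, and `ρ(p) > 0` for all primes `p ∣ L`
with `p ∤ M`, then
`Σ_{d ∣ L} ξ_d(1)² = ∏_{p ∣ L, p ∤ M} ρ(p)⁻¹ · ∏_{p² ∣ N, p² ∤ M} p²/(p² - 1)`. -/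
theorem sum_xi_one_sq (L M N : ℕ) (hL : 0 < L) (hM : 0 < M) (hN : N = L * M)
    (lam : ℕ → ℝ) (hmult : IsMult lam)
    (h1 : ∀ p : ℕ, p.Prime → p ∣ M → ¬ p ^ 2 ∣ M → (lam p) ^ 2 = 1 / p)
    (h2 : ∀ p : ℕ, p.Prime → p ^ 2 ∣ M → lam p = 0)
    (h3 : ∀ p : ℕ, p.Prime → p ∣ L → ¬ p ∣ M → 0 < rho lam p) :
    ∑ d ∈ L.divisors, (xi M lam d 1) ^ 2 =
      (∏ p ∈ L.primeFactors.filter (fun p => ¬ p ∣ M), (rho lam p)⁻¹) *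
        ∏ p ∈ N.primeFactors.filter (fun p => p ^ 2 ∣ N ∧ ¬ p ^ 2 ∣ M),
          (p : ℝ) ^ 2 / ((p : ℝ) ^ 2 - 1) :=
  sum_xi_one_sq_general L M N hL hN lam hmult h1 h2 h3

end
end

section
/- The arithmetic function η is multiplicative, and its values at prime powers are: η(p) = p − 1, η(p²) = p² − p − 1, and η(p^v) = p^v·(1 − 1/p)·(1 − 1/p²) for every integer v ≥ 3 and every prime p. -/
open scoped BigOperators
open Finset

noncomputable section

/-- `η(n) = Σ_{LM = n} μ(L) · M · ∏_{p² ∣ M} (1 - 1/p²)`, the sum running over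
all ordered factorizations `n = L·M` and the product over primes `p` with
`p² ∣ M`, as a real number. -/
def eta (n : ℕ) : ℝ :=
  ∑ L ∈ n.divisors,
    (ArithmeticFunction.moebius L : ℝ) * (n / L : ℕ) *
      ∏ p ∈ (n / L).primeFactors.filter (fun p => p ^ 2 ∣ n / L),
        (1 - 1 / (p : ℝ) ^ 2)

/-! Unfolding the definition, `η = μ ∗ g` with `g(M) = M · ∏_{p² ∣ M} (1 - 1/p²)`. The function `g`
is multiplicative because for coprime `m, n` the primes whose square divides `mn` are those of `m`
together with those of `n`; hence so is `η`. At a prime power `μ` leaves only two terms,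
`η(p^v) = g(p^v) - g(p^(v-1))`, and `g(p) = p`, `g(p^k) = p^k (1 - 1/p²)` for `k ≥ 2`. -/

open scoped ArithmeticFunction.Moebius

theorem Nat.Coprime.prod_primeFactors_filter_pow_dvd_mul {M : Type*} [CommMonoid M]
    {m n : ℕ} (h : m.Coprime n) (k : ℕ) (f : ℕ → M) :
    ∏ p ∈ (m * n).primeFactors.filter (fun p => p ^ k ∣ m * n), f p =
      (∏ p ∈ m.primeFactors.filter (fun p => p ^ k ∣ m), f p) *
        ∏ p ∈ n.primeFactors.filter (fun p => p ^ k ∣ n), f p := by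
  have hm : ∀ p ∈ m.primeFactors, (p ^ k ∣ m * n ↔ p ^ k ∣ m) := fun p hp =>
    ((h.coprime_dvd_left (Nat.dvd_of_mem_primeFactors hp)).pow_left k).dvd_mul_right
  have hn : ∀ p ∈ n.primeFactors, (p ^ k ∣ m * n ↔ p ^ k ∣ n) := fun p hp =>
    ((h.symm.coprime_dvd_left (Nat.dvd_of_mem_primeFactors hp)).pow_left k).dvd_mul_left
  rw [h.primeFactors_mul, filter_union, filter_congr hm, filter_congr hn,
    prod_union (disjoint_filter_filter h.disjoint_primeFactors)]

theorem ArithmeticFunction.coe_moebius_mul_apply_prime_pow_succ {R : Type*} [Ring R]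
    (f : ArithmeticFunction R) {p : ℕ} (hp : p.Prime) (k : ℕ) :
    ((μ : ArithmeticFunction R) * f) (p ^ (k + 1)) = f (p ^ (k + 1)) - f (p ^ k) := by
  rw [mul_apply, Nat.sum_divisorsAntidiagonal (fun a b => (μ : ArithmeticFunction R) a * f b),
    Nat.sum_divisors_prime_pow hp, sum_range_succ', sum_range_succ']
  have hsq (i : ℕ) : (μ : ArithmeticFunction R) (p ^ (i + 1 + 1)) = 0 := by
    simp [moebius_apply_prime_pow hp]
  have hdiv : p ^ (k + 1) / p = p ^ k := by rw [pow_succ, Nat.mul_div_cancel _ hp.pos]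
  simp [hsq, moebius_apply_prime hp, hdiv, sub_eq_neg_add]

def etaFactor : ArithmeticFunction ℝ :=
  ⟨fun M => (M : ℝ) * ∏ p ∈ M.primeFactors.filter (fun p => p ^ 2 ∣ M), (1 - 1 / (p : ℝ) ^ 2),
    by simp⟩

theorem etaFactor_apply (M : ℕ) :
    etaFactor M = (M : ℝ) * ∏ p ∈ M.primeFactors.filter (fun p => p ^ 2 ∣ M),
      (1 - 1 / (p : ℝ) ^ 2) := rfl

theorem isMultiplicative_etaFactor : etaFactor.IsMultiplicative := by
  refine ⟨by simp [etaFactor_apply], fun {m n} h => ?_⟩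
  rw [etaFactor_apply, etaFactor_apply, etaFactor_apply,
    h.prod_primeFactors_filter_pow_dvd_mul, Nat.cast_mul]
  ring

theorem etaFactor_prime {p : ℕ} (hp : p.Prime) : etaFactor p = p := by
  have hsq : ¬ p ^ 2 ∣ p := fun hd => by
    have := Nat.le_of_dvd hp.pos hd
    nlinarith [hp.two_le]
  simp [etaFactor_apply, hp.primeFactors, filter_singleton, hsq]

theorem etaFactor_prime_pow {p k : ℕ} (hp : p.Prime) (hk : 2 ≤ k) :
    etaFactor (p ^ k) = (p : ℝ) ^ k * (1 - 1 / (p : ℝ) ^ 2) := by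
  simp [etaFactor_apply, Nat.primeFactors_prime_pow (by omega : k ≠ 0) hp, filter_singleton,
    pow_dvd_pow p hk]

theorem eta_eq_moebius_mul_etaFactor : eta = ⇑((μ : ArithmeticFunction ℝ) * etaFactor) := by
  funext n
  rw [eta, ArithmeticFunction.mul_apply,
    Nat.sum_divisorsAntidiagonal (fun L M => (μ : ArithmeticFunction ℝ) L * etaFactor M)]
  simp [etaFactor_apply, mul_assoc]

/-- `η` is multiplicative, with `η(p) = p - 1`,
`η(p²) = p² - p - 1`, and `η(p^v) = p^v (1 - 1/p)(1 - 1/p²)` for `v ≥ 3`. -/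
theorem eta_multiplicative_and_values :
    (eta 1 = 1 ∧
      ∀ m n : ℕ, 0 < m → 0 < n → Nat.Coprime m n → eta (m * n) = eta m * eta n) ∧
    ∀ p : ℕ, p.Prime →
      eta p = (p : ℝ) - 1 ∧
      eta (p ^ 2) = (p : ℝ) ^ 2 - p - 1 ∧
      ∀ v : ℕ, 3 ≤ v →
        eta (p ^ v) = (p : ℝ) ^ v * (1 - 1 / p) * (1 - 1 / (p : ℝ) ^ 2) := by
  have hη := ArithmeticFunction.isMultiplicative_moebius.intCast.mul isMultiplicative_etaFactor
  rw [eta_eq_moebius_mul_etaFactor]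
  refine ⟨⟨hη.map_one, fun m n _ _ h => hη.map_mul_of_coprime h⟩, fun p hp => ?_⟩
  have hp0 : (p : ℝ) ≠ 0 := by exact_mod_cast hp.ne_zero
  have hstep := ArithmeticFunction.coe_moebius_mul_apply_prime_pow_succ etaFactor hp
  refine ⟨?_, ?_, fun v hv => ?_⟩
  · simpa [etaFactor_prime hp, isMultiplicative_etaFactor.map_one] using hstep 0
  · rw [hstep 1, etaFactor_prime_pow hp le_rfl, pow_one, etaFactor_prime hp]
    field_simp
    ring
  · obtain ⟨k, rfl⟩ : ∃ k, v = k + 1 := ⟨v - 1, by omega⟩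
    rw [hstep, etaFactor_prime_pow hp (by omega), etaFactor_prime_pow hp (by omega)]
    field_simp
    ring

end
end

section
/- The series Σ_{j = 0}^∞ λ_{2j}·p^{-j} converges absolutely and equals (1 + 1/p)^{-1} · ( 1 − p·λ_1²/(p+1)² )^{-1}. -/
/-!
With `a = λ₁` the sequence is the Chebyshev sequence `λⱼ = Uⱼ(a/2)`. The quadratic form
`λⱼ₊₁² - a λⱼ₊₁ λⱼ + λⱼ²` is invariant under the recursion, hence equal to `1`; together with
`|a| ≤ 2` this forces `|λⱼ₊₁| ≤ |λⱼ| + 1`, so `|λⱼ| ≤ j + 1` and the series converges for `p ≥ 2`.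
The even terms satisfy `λ₂ⱼ₊₄ = (a² - 2) λ₂ⱼ₊₂ - λ₂ⱼ`, so `Σ λ₂ⱼ tʲ = (1 + t) / (1 - (a² - 2) t + t²)`,
which at `t = 1/p` is the stated product.
-/

section ChebyshevRecurrence

variable {u : ℕ → ℝ} {a : ℝ}

theorem abs_le_abs_add_one_of_sq_sub_mul_add_sq_eq_one {x y : ℝ} (ha : |a| ≤ 2)
    (h : x ^ 2 - a * x * y + y ^ 2 = 1) : |x| ≤ |y| + 1 := by
  have hxy : a * x * y ≤ 2 * (|x| * |y|) :=
    calc a * x * y ≤ |a| * (|x| * |y|) := by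
          rw [← abs_mul, ← abs_mul, ← mul_assoc]; exact le_abs_self _
      _ ≤ 2 * (|x| * |y|) := by gcongr
  have : (|x| - |y|) ^ 2 ≤ 1 := by nlinarith [sq_abs x, sq_abs y]
  nlinarith [abs_nonneg x, abs_nonneg y]

theorem sq_sub_mul_add_sq_eq_one_of_rec (h0 : u 0 = 1) (h1 : u 1 = a)
    (hrec : ∀ n, u (n + 2) = a * u (n + 1) - u n) (n : ℕ) :
    u (n + 1) ^ 2 - a * u (n + 1) * u n + u n ^ 2 = 1 := by
  induction n with
  | zero => rw [h0, h1]; ring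
  | succ n ih => rw [hrec n]; linear_combination ih

theorem abs_le_succ_of_rec (h0 : u 0 = 1) (h1 : u 1 = a)
    (hrec : ∀ n, u (n + 2) = a * u (n + 1) - u n) (ha : |a| ≤ 2) (n : ℕ) :
    |u n| ≤ n + 1 := by
  induction n with
  | zero => simp [h0]
  | succ n ih =>
    have hstep := abs_le_abs_add_one_of_sq_sub_mul_add_sq_eq_one ha
      (sq_sub_mul_add_sq_eq_one_of_rec h0 h1 hrec n)
    push_cast
    linarith

theorem add_four_eq_of_rec (hrec : ∀ n, u (n + 2) = a * u (n + 1) - u n) (n : ℕ) :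
    u (n + 4) = (a ^ 2 - 2) * u (n + 2) - u n := by
  linear_combination hrec (n + 2) + a * hrec (n + 1) + hrec n

end ChebyshevRecurrence

theorem summable_mul_pow_of_abs_le_mul_succ {u : ℕ → ℝ} {C t : ℝ}
    (hu : ∀ n, |u n| ≤ C * (n + 1)) (ht : |t| < 1) : Summable fun n => u n * t ^ n := by
  have hgeom : Summable fun n : ℕ => ((n : ℝ) ^ 1 + n ^ 0) * |t| ^ n := by
    simp_rw [add_mul]
    exact (summable_pow_mul_geometric_of_norm_lt_one 1 (by simpa using ht)).add
      (summable_pow_mul_geometric_of_norm_lt_one 0 (by simpa using ht))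
  refine (hgeom.mul_left C).of_norm_bounded fun n => ?_
  rw [Real.norm_eq_abs, abs_mul, abs_pow, pow_one, pow_zero, ← mul_assoc]
  gcongr
  exact hu n

theorem tsum_mul_pow_of_linear_rec {R : Type*} [CommRing R] [TopologicalSpace R]
    [IsTopologicalRing R] [T2Space R] {u : ℕ → R} {b c t : R}
    (hs : Summable fun n => u n * t ^ n) (hrec : ∀ n, u (n + 2) = b * u (n + 1) + c * u n) :
    (1 - b * t - c * t ^ 2) * ∑' n, u n * t ^ n = u 0 + (u 1 - b * u 0) * t := by
  set f := fun n => u n * t ^ n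
  have hs1 : Summable fun n => f (n + 1) := (summable_nat_add_iff 1).mpr hs
  have hshift : ∀ n, f (n + 2) = b * t * f (n + 1) + c * t ^ 2 * f n := fun n => by
    simp only [f, hrec n]; ring
  have h2 : ∑' n, f (n + 2) = b * t * ∑' n, f (n + 1) + c * t ^ 2 * ∑' n, f n := by
    rw [tsum_congr hshift, (hs1.mul_left _).tsum_add (hs.mul_left _), hs1.tsum_mul_left,
      hs.tsum_mul_left]
  have e0 := hs.tsum_eq_zero_add
  have e1 := hs1.tsum_eq_zero_add
  simp only [f] at e0 e1 h2 ⊢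
  linear_combination (1 - b * t) * e0 + e1 + h2

/-- Let `p` be a prime and `(λ_j)` a real sequence with
`λ_0 = 1`, the Hecke recursion `λ_1 λ_j = λ_{j+1} + λ_{j-1}` for `j ≥ 1`, and
`|λ_1| ≤ 2`. Then `Σ_{j ≥ 0} λ_{2j} p^{-j}` converges absolutely and equals
`(1 + 1/p)⁻¹ (1 - p λ_1²/(p+1)²)⁻¹`. -/
theorem local_symmetric_square_factor (p : ℕ) (hp : p.Prime) (lam : ℕ → ℝ)
    (h0 : lam 0 = 1)
    (hrec : ∀ j : ℕ, 1 ≤ j → lam 1 * lam j = lam (j + 1) + lam (j - 1))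
    (hbd : |lam 1| ≤ 2) :
    Summable (fun j : ℕ => lam (2 * j) / (p : ℝ) ^ j) ∧
    ∑' j : ℕ, lam (2 * j) / (p : ℝ) ^ j =
      (1 + 1 / (p : ℝ))⁻¹ * (1 - p * (lam 1) ^ 2 / ((p : ℝ) + 1) ^ 2)⁻¹ := by
  have hlam : ∀ n, lam (n + 2) = lam 1 * lam (n + 1) - lam n := fun n => by
    have h := hrec (n + 1) (Nat.le_add_left 1 n)
    rw [Nat.add_sub_cancel] at h
    linarith
  have heven : ∀ n, lam (2 * (n + 2)) = (lam 1 ^ 2 - 2) * lam (2 * (n + 1)) + -1 * lam (2 * n) :=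
    fun n => by linear_combination add_four_eq_of_rec hlam (2 * n)
  have hq : (1 : ℝ) < p := by exact_mod_cast hp.one_lt
  have hs : Summable fun j => lam (2 * j) * (p : ℝ)⁻¹ ^ j := by
    refine summable_mul_pow_of_abs_le_mul_succ (C := 2) (fun n => ?_) ?_
    · have hbound := abs_le_succ_of_rec h0 rfl hlam hbd (2 * n)
      push_cast at hbound
      linarith
    · rw [abs_inv, abs_of_pos (by linarith)]
      exact inv_lt_one_of_one_lt₀ hq
  have key := tsum_mul_pow_of_linear_rec hs heven
  simp only [div_eq_mul_inv (lam _), ← inv_pow]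
  refine ⟨hs, ?_⟩
  have hD : 0 < ((p : ℝ) + 1) ^ 2 - p * lam 1 ^ 2 := by
    have : lam 1 ^ 2 ≤ 2 ^ 2 := sq_le_sq.mpr (by simpa using hbd)
    nlinarith
  simp only [mul_zero, mul_one, h0, hlam 0, zero_add] at key
  field_simp at key
  field_simp
  linear_combination key
end
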